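/- Let k > r ≥ 4 and n > 2k+1, and let H be a connected r-graph on n vertices with δ1(H) ≥ C(k, r−1). Then ℓ(H) ≥ 2k. Moreover, if ℓ(H) = 2k, then every longest Berge path P in H, with edges e_1,...,e_{2k} and key vertices v_0,v_1,...,v_{2k}, satisfies |K_0(P)| = |K_{2k}(P)| = k. -/

import Mathlib

namespace Berge

variable {V : Type*} [DecidableEq V] [Fintype V]

/-- `E` is the edge set of an `r`-uniform hypergraph (`r`-graph) on `V`. -/
def IsRGraph (r : ℕ) (E : Finset (Finset V)) : Prop :=
  ∀ e ∈ E, e.card = r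

/-- The degree of a vertex: the number of edges containing it. -/
def deg (E : Finset (Finset V)) (x : V) : ℕ :=
  (E.filter fun e => x ∈ e).card

/-- The minimum degree `δ₁`. -/
noncomputable def minDeg (E : Finset (Finset V)) : ℕ :=
  sInf {d | ∃ x : V, deg E x = d}

/-- A Berge path of length `t`: distinct vertices `v 0, ..., v t` and distinct edges
`f 0, ..., f (t-1)` (here `f i` plays the role of the edge `e_{i+1}` of the paper),
with `{v i, v (i+1)} ⊆ f i`. -/
def IsBergePath (E : Finset (Finset V)) (t : ℕ)
    (v : Fin (t + 1) → V) (f : Fin t → Finset V) : Prop :=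
  Function.Injective v ∧ Function.Injective f ∧ (∀ i, f i ∈ E) ∧
    ∀ i : Fin t, v i.castSucc ∈ f i ∧ v i.succ ∈ f i

/-- `H` is connected: any two vertices are connected by a Berge path. -/
def Connected (E : Finset (Finset V)) : Prop :=
  ∀ u w : V, ∃ (t : ℕ) (v : Fin (t + 1) → V) (f : Fin t → Finset V),
    IsBergePath E t v f ∧ v 0 = u ∧ v (Fin.last t) = w

/-- `ℓ(H)`: the length of a longest Berge path. -/
noncomputable def pathLen (E : Finset (Finset V)) : ℕ :=
  sSup {t | ∃ (v : Fin (t + 1) → V) (f : Fin t → Finset V), IsBergePath E t v f}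

/-- A Berge cycle of length `t`: distinct vertices `v 0, ..., v (t-1)` and distinct
edges `f 0, ..., f (t-1)` with `{v (i-1), v i} ⊆ f i` (indices mod `t`), equivalently
`v i ∈ f i` and `v i ∈ f (i+1)` for all `i`. -/
def IsBergeCycle (E : Finset (Finset V)) (t : ℕ)
    (v : Fin t → V) (f : Fin t → Finset V) : Prop :=
  Function.Injective v ∧ Function.Injective f ∧ (∀ i, f i ∈ E) ∧
    ∀ i : Fin t, v i ∈ f i ∧ v i ∈ f ⟨((i : ℕ) + 1) % t, Nat.mod_lt _ i.pos⟩

/-- `c(H)`: the length of a longest Berge cycle. -/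
noncomputable def cycLen (E : Finset (Finset V)) : ℕ :=
  sSup {t | ∃ (v : Fin t → V) (f : Fin t → Finset V), IsBergeCycle E t v f}

/-- `E^O(P, w)`: the edges of `H` outside `P` that contain `w`. -/
def EO (E : Finset (Finset V)) {t : ℕ} (f : Fin t → Finset V) (w : V) :
    Set (Finset V) :=
  {e | e ∈ E ∧ e ∉ Set.range f ∧ w ∈ e}

/-- `K(P, w)`: the key vertices of `P` other than `w` that lie on some edge of
`E^O(P, w)`.  For `w = v a` with `a ∈ {0, t}` this is `K_a(P)`; for `w ∉ K(P)` this
is `K_w(P)`. -/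
def KsetP (E : Finset (Finset V)) {t : ℕ} (v : Fin (t + 1) → V)
    (f : Fin t → Finset V) (w : V) : Set V :=
  {x | (∃ i, v i = x) ∧ x ≠ w ∧ ∃ e ∈ EO E f w, x ∈ e}

/-- `κ(P, w)`: the set of indices of the vertices in `K(P, w)` (as integers). -/
def kappa (E : Finset (Finset V)) {t : ℕ} (v : Fin (t + 1) → V)
    (f : Fin t → Finset V) (w : V) : Set ℤ :=
  {i : ℤ | ∃ j : Fin (t + 1), ((j : ℕ) : ℤ) = i ∧ v j ∈ KsetP E v f w}

/-- `E^I(P, w)`: the edges of `P` that contain `w`. -/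
def EIset {t : ℕ} (f : Fin t → Finset V) (w : V) : Set (Finset V) :=
  {e | e ∈ Set.range f ∧ w ∈ e}

/-- `ε^i(P, w)`: the (1-based, as in the paper) indices of the edges of `P`
containing `w`, as integers; so `i ∈ ε^i(P, w)` iff `w ∈ e_i = f (i-1)`. -/
def epsi {t : ℕ} (f : Fin t → Finset V) (w : V) : Set ℤ :=
  {i : ℤ | ∃ j : Fin t, ((j : ℕ) : ℤ) + 1 = i ∧ w ∈ f j}

/-- `N_H(x) = {T : T ∪ {x} ∈ E(H)}` (with `x ∉ T`). -/
def NH (E : Finset (Finset V)) (x : V) : Set (Finset V) :=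
  {T | x ∉ T ∧ insert x T ∈ E}

/-- The edge set of `S_r(n, k)` on the vertex set `V` (`|V| = n`), where `A ⊆ V` is
the distinguished `k`-set: all `r`-sets `e` with `|e ∩ (V \ A)| ≤ 1`. -/
def Sr (r : ℕ) (A : Finset V) : Finset (Finset V) :=
  Finset.univ.filter fun e : Finset V => e.card = r ∧ (e \ A).card ≤ 1

/-- The edge set of `S'_r(n, k)`: all `r`-sets `e` with `|e ∩ (V \ A)| = 1`. -/
def Sr' (r : ℕ) (A : Finset V) : Finset (Finset V) :=
  Finset.univ.filter fun e : Finset V => e.card = r ∧ (e \ A).card = 1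

/-- The edge set of `S(sK^r_{k+1}, 1)` determined by the cliques `B 0, ..., B (s-1)`:
all `r`-subsets of some `B i`. -/
def SK (r : ℕ) {s : ℕ} (B : Fin s → Finset V) : Finset (Finset V) :=
  Finset.univ.filter fun e : Finset V => e.card = r ∧ ∃ i, e ⊆ B i

/-- `H` is isomorphic to `S(sK^r_{k+1}, 1)`: there are `s` cliques of size `k+1`
pairwise meeting exactly in a common center `c` and covering `V`, and the edges of
`H` are exactly the `r`-subsets of the cliques. -/
def IsStarOfCliques (r k s : ℕ) (E : Finset (Finset V)) : Prop :=
  ∃ (c : V) (B : Fin s → Finset V),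
    (∀ i, (B i).card = k + 1) ∧ (∀ i, c ∈ B i) ∧
    (∀ i j, i ≠ j → B i ∩ B j = {c}) ∧
    Finset.univ.biUnion B = Finset.univ ∧
    E = SK r B

set_option linter.unusedSectionVars false

/-!
Let `P = v 0 … v t` be a longest Berge path. Every edge off `P` through an end lies inside
`V(P)`, and none contains both ends: it would close a Berge cycle of length `t + 1`, and since `H`
is connected and has a vertex off the cycle, an edge leaving the cycle extends the path around it.
Pósa rotations reduce further configurations to this one: `v s ∈ K_t(P)` excludes both
`v (s+1) ∈ K_0(P)` and `v 0 ∈ e_{s+1}`. Hence `|K_0| + |K_t| ≤ t` and `d + |K_t| ≤ t`, where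
`d` counts the path edges through `v 0`, while the degree of `v 0` gives
`C(k, r-1) ≤ d + C(|K_0|, r-1)`; symmetrically at `v t`. For `t ≤ 2k` these force `t = 2k` and `|K_0| = |K_t| = k`, except for
`k = 5`, `r = 4`, where `(|K_0|, |K_t|) = (0, 0)` and `(4, 4)` also fit. Further rotations exclude
both; in the `(4, 4)` case no edge leaves `V(P)`, contradicting connectivity.
-/

variable {E : Finset (Finset V)}

/-- `IsBergePath` with `ℕ`-indexed vertices and edges; only `v i` for `i ≤ t` and `f i` for
`i < t` matter. -/
structure IsPath (E : Finset (Finset V)) (t : ℕ) (v : ℕ → V) (f : ℕ → Finset V) : Prop where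
  inj_vert : ∀ i ≤ t, ∀ j ≤ t, v i = v j → i = j
  inj_edge : ∀ i < t, ∀ j < t, f i = f j → i = j
  edge_mem : ∀ i < t, f i ∈ E
  mem_left : ∀ i < t, v i ∈ f i
  mem_right : ∀ i < t, v (i + 1) ∈ f i

def IsLongestPath (E : Finset (Finset V)) (t : ℕ) (v : ℕ → V) (f : ℕ → Finset V) : Prop :=
  IsPath E t v f ∧ ∀ s w g, IsPath E s w g → s ≤ t

section Conversion

variable {t : ℕ}

def vertSeq (v : Fin (t + 1) → V) : ℕ → V := fun i => v ⟨min i t, by omega⟩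

def edgeSeq (f : Fin t → Finset V) : ℕ → Finset V := fun i => if hi : i < t then f ⟨i, hi⟩ else ∅

lemma vertSeq_of_le (v : Fin (t + 1) → V) {i : ℕ} (hi : i ≤ t) :
    vertSeq v i = v ⟨i, by omega⟩ := by
  simp only [vertSeq, min_eq_left hi]

lemma vertSeq_zero (v : Fin (t + 1) → V) : vertSeq v 0 = v 0 := vertSeq_of_le v (Nat.zero_le t)

lemma vertSeq_last (v : Fin (t + 1) → V) : vertSeq v t = v (Fin.last t) := vertSeq_of_le v le_rfl

lemma edgeSeq_of_lt (f : Fin t → Finset V) {i : ℕ} (hi : i < t) :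
    edgeSeq f i = f ⟨i, hi⟩ := dif_pos hi

lemma IsBergePath.isPath {v : Fin (t + 1) → V} {f : Fin t → Finset V}
    (h : IsBergePath E t v f) : IsPath E t (vertSeq v) (edgeSeq f) where
  inj_vert i hi j hj hij := by
    rw [vertSeq_of_le v hi, vertSeq_of_le v hj] at hij
    simpa using h.1 hij
  inj_edge i hi j hj hij := by
    rw [edgeSeq_of_lt f hi, edgeSeq_of_lt f hj] at hij
    simpa using h.2.1 hij
  edge_mem i hi := by rw [edgeSeq_of_lt f hi]; exact h.2.2.1 _
  mem_left i hi := by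
    rw [edgeSeq_of_lt f hi, vertSeq_of_le v hi.le]; exact (h.2.2.2 ⟨i, hi⟩).1
  mem_right i hi := by
    rw [edgeSeq_of_lt f hi, vertSeq_of_le v hi]; exact (h.2.2.2 ⟨i, hi⟩).2

lemma IsPath.isBergePath {v : ℕ → V} {f : ℕ → Finset V} (h : IsPath E t v f) :
    IsBergePath E t (fun i : Fin (t + 1) => v i) (fun i : Fin t => f i) :=
  ⟨fun i j hij => Fin.ext (h.inj_vert i (Fin.is_le i) j (Fin.is_le j) hij),
    fun i j hij => Fin.ext (h.inj_edge i i.2 j j.2 hij), fun i => h.edge_mem i i.2,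
    fun i => ⟨h.mem_left i i.2, h.mem_right i i.2⟩⟩

lemma bddAbove_pathLengths (E : Finset (Finset V)) :
    BddAbove {t | ∃ (v : Fin (t + 1) → V) (f : Fin t → Finset V), IsBergePath E t v f} := by
  refine ⟨Fintype.card V, fun s ⟨w, _, hw⟩ => ?_⟩
  have := Fintype.card_le_of_injective w hw.1
  simp only [Fintype.card_fin] at this
  omega

lemma IsPath.le_pathLen {v : ℕ → V} {f : ℕ → Finset V} (h : IsPath E t v f) :
    t ≤ pathLen E :=
  le_csSup (bddAbove_pathLengths E) ⟨_, _, h.isBergePath⟩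

lemma IsBergePath.isLongestPath {v : Fin (t + 1) → V} {f : Fin t → Finset V}
    (h : IsBergePath E t v f) (ht : pathLen E ≤ t) :
    IsLongestPath E t (vertSeq v) (edgeSeq f) :=
  ⟨h.isPath, fun _ _ _ hs => hs.le_pathLen.trans ht⟩

lemma exists_isLongestPath [Nonempty V] (E : Finset (Finset V)) :
    ∃ v f, IsLongestPath E (pathLen E) v f := by
  obtain ⟨v, f, h⟩ : pathLen E ∈ {t | ∃ (v : Fin (t + 1) → V) (f : Fin t → Finset V),
      IsBergePath E t v f} := by
    refine Nat.sSup_mem ⟨0, fun _ => Classical.arbitrary V, Fin.elim0, ?_, ?_, ?_, ?_⟩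
      (bddAbove_pathLengths E)
    · exact fun i j _ => Fin.ext (by omega)
    all_goals exact fun i => i.elim0
  exact ⟨_, _, h.isLongestPath le_rfl⟩

end Conversion

section Operations

variable {t : ℕ} {v : ℕ → V} {f : ℕ → Finset V}

lemma IsPath.rev (h : IsPath E t v f) :
    IsPath E t (fun i => v (t - i)) (fun i => f (t - 1 - i)) where
  inj_vert i hi j hj hij := by have := h.inj_vert _ (by omega) _ (by omega) hij; omega
  inj_edge i hi j hj hij := by have := h.inj_edge _ (by omega) _ (by omega) hij; omega
  edge_mem i hi := h.edge_mem _ (by omega)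
  mem_left i hi := by
    convert h.mem_right (t - 1 - i) (by omega) using 2; omega
  mem_right i hi := by
    convert h.mem_left (t - 1 - i) (by omega) using 2; omega

def rotIdx (j i : ℕ) : ℕ := if i < j then j - 1 - i else i

lemma rotIdx_of_lt {j i : ℕ} (h : i < j) : rotIdx j i = j - 1 - i := if_pos h

lemma rotIdx_of_le {j i : ℕ} (h : j ≤ i) : rotIdx j i = i := if_neg (by omega)

lemma rotIdx_involutive (j : ℕ) : Function.Involutive (rotIdx j) := fun i => by
  unfold rotIdx; split_ifs <;> omega

lemma rotIdx_le {j i t : ℕ} (hj : j ≤ t) (hi : i ≤ t) : rotIdx j i ≤ t := by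
  unfold rotIdx; split_ifs <;> omega

lemma rotIdx_lt {j i t : ℕ} (hj : j ≤ t) (hi : i < t) : rotIdx j i < t := by
  unfold rotIdx; split_ifs <;> omega

lemma rotIdx_ne {j i : ℕ} (hi : i ≠ j) : rotIdx j i ≠ j := fun h =>
  hi ((rotIdx_involutive j).injective (h.trans (rotIdx_of_le le_rfl).symm))

/-- Pósa rotation: a chord `g` through `v 0` and `v j` turns `v (j-1), …, v 0, v j, …, v t` into a
path, whose edge `j - 1` is `g`. -/
def rotEdges (f : ℕ → Finset V) (g : Finset V) (j : ℕ) : ℕ → Finset V :=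
  Function.update (f ∘ rotIdx (j - 1)) (j - 1) g

lemma rotEdges_of_ne {g : Finset V} {j i : ℕ} (hi : i ≠ j - 1) :
    rotEdges f g j i = f (rotIdx (j - 1) i) :=
  Function.update_of_ne hi _ _

lemma rotEdges_self (g : Finset V) (j : ℕ) : rotEdges f g j (j - 1) = g :=
  Function.update_self _ _ _

lemma exists_rotEdges_eq_iff {g e : Finset V} {j : ℕ} (hj1 : 1 ≤ j) (hjt : j ≤ t) :
    (∃ i < t, rotEdges f g j i = e) ↔ g = e ∨ ∃ i < t, i ≠ j - 1 ∧ f i = e := by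
  have hlt : ∀ i < t, rotIdx (j - 1) i < t := fun i => rotIdx_lt (by omega)
  constructor
  · rintro ⟨i, hi, rfl⟩
    rcases eq_or_ne i (j - 1) with rfl | hij
    · exact Or.inl (rotEdges_self g _).symm
    · rw [rotEdges_of_ne hij]
      exact Or.inr ⟨_, hlt i hi, rotIdx_ne hij, rfl⟩
  · rintro (rfl | ⟨i, hi, hij, rfl⟩)
    · exact ⟨j - 1, by omega, rotEdges_self _ _⟩
    · refine ⟨rotIdx (j - 1) i, hlt i hi, ?_⟩
      rw [rotEdges_of_ne (rotIdx_ne hij), rotIdx_involutive]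

lemma forall_rotEdges_ne_iff {g e : Finset V} {j : ℕ} (hj1 : 1 ≤ j) (hjt : j ≤ t) :
    (∀ i < t, rotEdges f g j i ≠ e) ↔ g ≠ e ∧ ∀ i < t, i ≠ j - 1 → f i ≠ e := by
  simpa only [not_exists, not_and, not_or] using not_congr (exists_rotEdges_eq_iff hj1 hjt)

lemma IsPath.rotate (h : IsPath E t v f) {g : Finset V} {j : ℕ} (hj1 : 1 ≤ j) (hjt : j ≤ t)
    (hg : g ∈ E) (h0 : v 0 ∈ g) (hvj : v j ∈ g) (hgf : g = f (j - 1) ∨ ∀ i < t, f i ≠ g) :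
    IsPath E t (v ∘ rotIdx j) (rotEdges f g j) := by
  have hg' : ∀ i < t, i ≠ j - 1 → f i ≠ g := by
    rintro i hi hij rfl
    rcases hgf with hgf | hgf
    · exact hij (h.inj_edge _ hi _ (by omega) hgf)
    · exact hgf i hi rfl
  have hlt : ∀ i < t, rotIdx (j - 1) i < t := fun i => rotIdx_lt (by omega)
  refine ⟨fun i hi i' hi' hii => (rotIdx_involutive j).injective
    (h.inj_vert _ (rotIdx_le hjt hi) _ (rotIdx_le hjt hi') hii), fun i hi i' hi' hii => ?_,
    fun i hi => ?_, fun i hi => ?_, fun i hi => ?_⟩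
  · rcases eq_or_ne i (j - 1) with rfl | hi1 <;> rcases eq_or_ne i' (j - 1) with rfl | hi1'
    · rfl
    · rw [rotEdges_self, rotEdges_of_ne hi1'] at hii
      exact (hg' _ (hlt i' hi') (rotIdx_ne hi1') hii.symm).elim
    · rw [rotEdges_self, rotEdges_of_ne hi1] at hii
      exact (hg' _ (hlt i hi) (rotIdx_ne hi1) hii).elim
    · rw [rotEdges_of_ne hi1, rotEdges_of_ne hi1'] at hii
      exact (rotIdx_involutive _).injective (h.inj_edge _ (hlt i hi) _ (hlt i' hi') hii)
  · rcases eq_or_ne i (j - 1) with rfl | hi1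
    · rwa [rotEdges_self]
    · rw [rotEdges_of_ne hi1]; exact h.edge_mem _ (hlt i hi)
  · rcases lt_trichotomy i (j - 1) with hij | rfl | hij
    · rw [rotEdges_of_ne hij.ne, Function.comp_apply, rotIdx_of_lt hij, rotIdx_of_lt (by omega)]
      convert h.mem_right (j - 1 - 1 - i) (by omega) using 2; omega
    · rw [rotEdges_self, Function.comp_apply, rotIdx_of_lt (by omega), Nat.sub_self]
      exact h0
    · rw [rotEdges_of_ne hij.ne', Function.comp_apply, rotIdx_of_le (by omega),
        rotIdx_of_le (by omega)]
      exact h.mem_left i hi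
  · rcases lt_trichotomy i (j - 1) with hij | rfl | hij
    · rw [rotEdges_of_ne hij.ne, Function.comp_apply, rotIdx_of_lt hij, rotIdx_of_lt (by omega)]
      convert h.mem_left (j - 1 - 1 - i) (by omega) using 2; omega
    · rw [rotEdges_self, Function.comp_apply, rotIdx_of_le (by omega), Nat.sub_add_cancel hj1]
      exact hvj
    · rw [rotEdges_of_ne hij.ne', Function.comp_apply, rotIdx_of_le (by omega),
        rotIdx_of_le (by omega)]
      exact h.mem_right i hi

lemma IsPath.cons (h : IsPath E t v f) {g : Finset V} {x : V} (hg : g ∈ E)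
    (hoff : ∀ i < t, f i ≠ g) (h0 : v 0 ∈ g) (hx : x ∈ g) (hnew : ∀ i ≤ t, v i ≠ x) :
    IsPath E (t + 1) (fun i => if i = 0 then x else v (i - 1))
      (fun i => if i = 0 then g else f (i - 1)) where
  inj_vert i hi j hj hij := by
    split_ifs at hij with hi0 hj0 hj0
    · omega
    · exact absurd hij.symm (hnew _ (by omega))
    · exact absurd hij (hnew _ (by omega))
    · have := h.inj_vert _ (by omega) _ (by omega) hij; omega
  inj_edge i hi j hj hij := by
    split_ifs at hij with hi0 hj0 hj0
    · omega
    · exact absurd hij.symm (hoff _ (by omega))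
    · exact absurd hij (hoff _ (by omega))
    · have := h.inj_edge _ (by omega) _ (by omega) hij; omega
  edge_mem i hi := by
    split_ifs
    · exact hg
    · exact h.edge_mem _ (by omega)
  mem_left i hi := by
    split_ifs
    · exact hx
    · exact h.mem_left _ (by omega)
  mem_right i hi := by
    simp only [Nat.add_one_ne_zero, if_false, Nat.add_sub_cancel]
    split_ifs with hi0
    · subst hi0; exact h0
    · convert h.mem_right (i - 1) (by omega) using 2; omega

structure IsCycle (E : Finset (Finset V)) (n : ℕ) (v : ℕ → V) (c : ℕ → Finset V) : Prop where
  inj_vert : ∀ i < n, ∀ j < n, v i = v j → i = j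
  inj_edge : ∀ i < n, ∀ j < n, c i = c j → i = j
  edge_mem : ∀ i < n, c i ∈ E
  mem_left : ∀ i < n, v i ∈ c i
  mem_right : ∀ i < n, v ((i + 1) % n) ∈ c i

lemma IsPath.isCycle (h : IsPath E t v f) {e : Finset V} (he : e ∈ E) (hoff : ∀ i < t, f i ≠ e)
    (h0 : v 0 ∈ e) (ht : v t ∈ e) : IsCycle E (t + 1) v (Function.update f t e) where
  inj_vert i hi j hj hij := h.inj_vert i (by omega) j (by omega) hij
  inj_edge i hi j hj hij := by
    simp only [Function.update_apply] at hij
    split_ifs at hij with hit hjt hjt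
    · omega
    · exact absurd hij.symm (hoff j (by omega))
    · exact absurd hij (hoff i (by omega))
    · exact h.inj_edge i (by omega) j (by omega) hij
  edge_mem i hi := by
    rw [Function.update_apply]; split_ifs
    · exact he
    · exact h.edge_mem i (by omega)
  mem_left i hi := by
    rw [Function.update_apply]; split_ifs with hit
    · rwa [hit]
    · exact h.mem_left i (by omega)
  mem_right i hi := by
    rw [Function.update_apply]; split_ifs with hit
    · rwa [hit, Nat.mod_self]
    · rw [Nat.mod_eq_of_lt (by omega)]; exact h.mem_right i (by omega)

lemma eq_of_add_mod_eq_add_mod {n p a b : ℕ} (ha : a < n) (hb : b < n)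
    (h : (p + a) % n = (p + b) % n) : a = b := by
  have h' : a % n = b % n := Nat.ModEq.add_left_cancel' p h
  rwa [Nat.mod_eq_of_lt ha, Nat.mod_eq_of_lt hb] at h'

lemma IsCycle.isPath_shift {c : ℕ → Finset V} (h : IsCycle E (t + 1) v c) (p : ℕ) :
    IsPath E t (fun i => v ((p + i) % (t + 1))) (fun i => c ((p + i) % (t + 1))) where
  inj_vert i hi j hj hij :=
    eq_of_add_mod_eq_add_mod (by omega) (by omega)
      (h.inj_vert _ (Nat.mod_lt _ (by omega)) _ (Nat.mod_lt _ (by omega)) hij)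
  inj_edge i hi j hj hij :=
    eq_of_add_mod_eq_add_mod (by omega) (by omega)
      (h.inj_edge _ (Nat.mod_lt _ (by omega)) _ (Nat.mod_lt _ (by omega)) hij)
  edge_mem i _ := h.edge_mem _ (Nat.mod_lt _ (by omega))
  mem_left i _ := h.mem_left _ (Nat.mod_lt _ (by omega))
  mem_right i _ := by
    have := h.mem_right _ (Nat.mod_lt (p + i) (show 0 < t + 1 by omega))
    rwa [Nat.mod_add_mod] at this

end Operations

section Longest

variable {t : ℕ} {v : ℕ → V} {f : ℕ → Finset V}

lemma IsLongestPath.rev (hP : IsLongestPath E t v f) :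
    IsLongestPath E t (fun i => v (t - i)) (fun i => f (t - 1 - i)) :=
  ⟨hP.1.rev, hP.2⟩

lemma IsLongestPath.rotate (hP : IsLongestPath E t v f) {g : Finset V} {j : ℕ} (hj1 : 1 ≤ j)
    (hjt : j ≤ t) (hg : g ∈ E) (h0 : v 0 ∈ g) (hvj : v j ∈ g)
    (hgf : g = f (j - 1) ∨ ∀ i < t, f i ≠ g) :
    IsLongestPath E t (v ∘ rotIdx j) (rotEdges f g j) :=
  ⟨hP.1.rotate hj1 hjt hg h0 hvj hgf, hP.2⟩

lemma IsLongestPath.exists_eq_of_mem (hP : IsLongestPath E t v f) {g : Finset V} {x : V}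
    (hg : g ∈ E) (hoff : ∀ i < t, f i ≠ g) (h0 : v 0 ∈ g) (hx : x ∈ g) : ∃ i ≤ t, v i = x := by
  by_contra! hnew
  have := hP.2 _ _ _ (hP.1.cons hg hoff h0 hx hnew)
  omega

lemma exists_forall_ne_of_lt_card (v : ℕ → V) (ht : t + 1 < Fintype.card V) :
    ∃ u, ∀ i ≤ t, v i ≠ u := by
  by_contra! hall
  have hsub : (Finset.univ : Finset V) ⊆ (Finset.range (t + 1)).image v := fun u _ => by
    obtain ⟨i, hi, rfl⟩ := hall u
    exact Finset.mem_image_of_mem v (Finset.mem_range.2 (by omega))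
  have := (Finset.card_le_card hsub).trans Finset.card_image_le
  simp only [Finset.card_univ, Finset.card_range] at this
  omega

lemma Connected.exists_edge_across (hconn : Connected E) {S : Set V} {u w : V} (hu : u ∉ S)
    (hw : w ∈ S) : ∃ h ∈ E, ∃ x ∈ h, ∃ y ∈ h, x ∉ S ∧ y ∈ S := by
  classical
  obtain ⟨s, q, g, hq, hq0, hqs⟩ := hconn u w
  have hQ := hq.isPath
  have hqs' : vertSeq q s ∈ S := by rw [vertSeq_last, hqs]; exact hw
  have hex : ∃ m, vertSeq q m ∈ S := ⟨s, hqs'⟩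
  have hm0 : Nat.find hex ≠ 0 := fun h0 => by
    have := Nat.find_spec hex
    rw [h0, vertSeq_zero] at this
    exact hu (hq0 ▸ this)
  have hms : Nat.find hex ≤ s := Nat.find_min' hex hqs'
  refine ⟨_, hQ.edge_mem (Nat.find hex - 1) (by omega), _,
    hQ.mem_left (Nat.find hex - 1) (by omega), _, hQ.mem_right (Nat.find hex - 1) (by omega),
    Nat.find_min hex (by omega), ?_⟩
  rw [Nat.sub_add_cancel (Nat.one_le_iff_ne_zero.2 hm0)]
  exact Nat.find_spec hex

/-- Connectivity gives an edge leaving `v 0, …, v t`; if it restarts a longest path on these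
vertices, that path extends. -/
lemma Connected.false_of_restart (hconn : Connected E) (hcard : t + 2 ≤ Fintype.card V)
    (hrestart : ∀ h ∈ E, ∀ p ≤ t, v p ∈ h → (∃ x ∈ h, ∀ m ≤ t, v m ≠ x) →
      ∃ w g, IsLongestPath E t w g ∧ w 0 ∈ h ∧ (∀ i < t, g i ≠ h) ∧
        ∀ i ≤ t, ∃ m ≤ t, w i = v m) : False := by
  obtain ⟨u, hu⟩ := exists_forall_ne_of_lt_card v (t := t) (by omega)
  obtain ⟨h, hh, x, hx, y, hy, hxS, ⟨p, hp, rfl⟩⟩ :=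
    hconn.exists_edge_across (S := {y | ∃ m ≤ t, v m = y}) (u := u) (w := v 0)
      (fun ⟨m, hm, hmu⟩ => hu m hm hmu) ⟨0, Nat.zero_le t, rfl⟩
  have hxnew : ∀ m ≤ t, v m ≠ x := fun m hm hmx => hxS ⟨m, hm, hmx⟩
  obtain ⟨w, g, hQ, hw0, hoff, hkeys⟩ := hrestart h hh p hp hy ⟨x, hx, hxnew⟩
  obtain ⟨i, hi, hix⟩ := hQ.exists_eq_of_mem hh hoff hw0 hx
  obtain ⟨m, hm, hwm⟩ := hkeys i hi
  exact hxnew m hm (hwm ▸ hix)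

lemma IsLongestPath.no_closing_edge (hconn : Connected E) (hcard : t + 2 ≤ Fintype.card V)
    (hP : IsLongestPath E t v f) {e : Finset V} (he : e ∈ E) (hoff : ∀ i < t, f i ≠ e)
    (h0 : v 0 ∈ e) (ht : v t ∈ e) : False := by
  have hC := hP.1.isCycle he hoff h0 ht
  set c := Function.update f t e
  have hmod : ∀ p i, (p + i) % (t + 1) ≤ t := fun p i => Nat.lt_succ_iff.1 (Nat.mod_lt _ (by omega))
  refine hconn.false_of_restart (v := v) hcard fun h hh p hp hvp _ => ?_
  by_cases hs : ∃ s ≤ t, c s = h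
  · -- restart just after the cycle edge `h`, so that the path avoids it
    obtain ⟨s, hst, rfl⟩ := hs
    refine ⟨_, _, ⟨hC.isPath_shift (s + 1), hP.2⟩, hC.mem_right s (by omega), fun i hi hci => ?_,
      fun i _ => ⟨_, hmod _ _, rfl⟩⟩
    have := hC.inj_edge _ (Nat.mod_lt _ (by omega)) _ (by omega) hci
    have hs : (s + (1 + i)) % (t + 1) = (s + 0) % (t + 1) := by
      rw [← add_assoc, this, Nat.add_zero, Nat.mod_eq_of_lt (by omega)]
    have := eq_of_add_mod_eq_add_mod (by omega) (by omega) hs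
    omega
  · push Not at hs
    refine ⟨_, _, ⟨hC.isPath_shift p, hP.2⟩, by rwa [Nat.add_zero, Nat.mod_eq_of_lt (by omega)],
      fun i _ => hs _ (hmod _ _), fun i _ => ⟨_, hmod _ _, rfl⟩⟩

end Longest

section Counting

variable {t : ℕ} {v : ℕ → V} {f : ℕ → Finset V}

/-- `E^O(P, w)` for the path with edges `f`. -/
def outEdges (E : Finset (Finset V)) (t : ℕ) (f : ℕ → Finset V) (w : V) : Finset (Finset V) :=
  E.filter fun e => (∀ i < t, f i ≠ e) ∧ w ∈ e

/-- The indices of the vertices in `K(P, w)`. -/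
def keyIdx (E : Finset (Finset V)) (t : ℕ) (v : ℕ → V) (f : ℕ → Finset V) (w : V) : Finset ℕ :=
  (Finset.range (t + 1)).filter fun i => v i ≠ w ∧ ∃ e ∈ outEdges E t f w, v i ∈ e

def edgeIdx (t : ℕ) (f : ℕ → Finset V) (w : V) : Finset ℕ :=
  (Finset.range t).filter fun i => w ∈ f i

lemma mem_outEdges {w : V} {e : Finset V} :
    e ∈ outEdges E t f w ↔ e ∈ E ∧ (∀ i < t, f i ≠ e) ∧ w ∈ e :=
  Finset.mem_filter

lemma mem_keyIdx {w : V} {i : ℕ} :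
    i ∈ keyIdx E t v f w ↔ i ≤ t ∧ v i ≠ w ∧ ∃ e ∈ outEdges E t f w, v i ∈ e := by
  simp only [keyIdx, Finset.mem_filter, Finset.mem_range, Nat.lt_succ_iff]

lemma mem_edgeIdx {w : V} {i : ℕ} : i ∈ edgeIdx t f w ↔ i < t ∧ w ∈ f i := by
  simp only [edgeIdx, Finset.mem_filter, Finset.mem_range]

lemma ncard_KsetP {v : Fin (t + 1) → V} {f : Fin t → Finset V} (hv : Function.Injective v)
    (w : V) : (KsetP E v f w).ncard = (keyIdx E t (vertSeq v) (edgeSeq f) w).card := by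
  have hoff : ∀ e, e ∉ Set.range f ↔ ∀ i < t, edgeSeq f i ≠ e := fun e => by
    simp only [Set.mem_range, not_exists]
    exact ⟨fun h i hi => by rw [edgeSeq_of_lt f hi]; exact h _,
      fun h i => by simpa [edgeSeq_of_lt f i.2] using h i i.2⟩
  have hset : KsetP E v f w = (keyIdx E t (vertSeq v) (edgeSeq f) w).image (vertSeq v) := by
    ext x
    simp only [KsetP, EO, Set.mem_ofPred_eq, Finset.coe_image, Set.mem_image, Finset.mem_coe,
      mem_keyIdx, mem_outEdges, hoff]
    constructor
    · rintro ⟨⟨i, rfl⟩, hxw, e, ⟨heE, heoff, hwe⟩, hxe⟩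
      refine ⟨i, ⟨Fin.is_le i, ?_, e, ⟨heE, heoff, hwe⟩, ?_⟩, ?_⟩ <;>
        rw [vertSeq_of_le v (Fin.is_le i)] <;> assumption
    · rintro ⟨i, ⟨hit, hiw, e, he, hie⟩, rfl⟩
      rw [vertSeq_of_le v hit] at hiw hie ⊢
      exact ⟨⟨_, rfl⟩, hiw, e, he, hie⟩
  rw [hset, Set.ncard_coe_finset, Finset.card_image_of_injOn]
  intro i hi j hj hij
  simp only [Finset.mem_coe, mem_keyIdx] at hi hj
  rw [vertSeq_of_le v hi.1, vertSeq_of_le v hj.1] at hij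
  simpa using congrArg Fin.val (hv hij)

lemma deg_le_card_edgeIdx_add_card_outEdges (t : ℕ) (f : ℕ → Finset V) (w : V) :
    deg E w ≤ (edgeIdx t f w).card + (outEdges E t f w).card := by
  rw [deg, ← Finset.card_filter_add_card_filter_not (fun e => ∃ i < t, f i = e)]
  refine add_le_add ?_ ?_
  · calc _ ≤ ((edgeIdx t f w).image f).card := Finset.card_le_card fun e he => by
          simp only [Finset.mem_filter] at he
          obtain ⟨⟨-, hwe⟩, i, hi, rfl⟩ := he
          exact Finset.mem_image_of_mem f (mem_edgeIdx.2 ⟨hi, hwe⟩)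
      _ ≤ _ := Finset.card_image_le
  · exact Finset.card_le_card fun e he => by
      simp only [Finset.mem_filter, not_exists, not_and] at he
      exact mem_outEdges.2 ⟨he.1.1, fun i hi => he.2 i hi, he.1.2⟩

lemma IsLongestPath.card_outEdges_le {r : ℕ} (hP : IsLongestPath E t v f) (hE : IsRGraph r E) :
    (outEdges E t f (v 0)).card ≤ (keyIdx E t v f (v 0)).card.choose (r - 1) := by
  calc (outEdges E t f (v 0)).card
      ≤ (((keyIdx E t v f (v 0)).image v).powersetCard (r - 1)).card := by
        refine Finset.card_le_card_of_injOn (fun e => e.erase (v 0)) (fun e he => ?_) ?_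
        · obtain ⟨heE, hoff, h0e⟩ := mem_outEdges.1 he
          refine Finset.mem_powersetCard.2 ⟨fun x hx => ?_, ?_⟩
          · obtain ⟨hx0, hxe⟩ := Finset.mem_erase.1 hx
            obtain ⟨i, hi, rfl⟩ := hP.exists_eq_of_mem heE hoff h0e hxe
            exact Finset.mem_image_of_mem v (mem_keyIdx.2 ⟨hi, hx0, e, he, hxe⟩)
          · rw [Finset.card_erase_of_mem h0e, hE e heE]
        · intro e he e' he' hee'
          rw [← Finset.insert_erase (mem_outEdges.1 he).2.2,
            ← Finset.insert_erase (mem_outEdges.1 he').2.2]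
          exact congrArg (insert (v 0)) hee'
    _ ≤ _ := by
        rw [Finset.card_powersetCard]
        exact Nat.choose_le_choose _ Finset.card_image_le

/-- Rotating at `s + 1` gives a longest path from `v s` to `v t` closed by an edge. -/
lemma IsLongestPath.not_cross (hconn : Connected E) (hcard : t + 2 ≤ Fintype.card V)
    (hP : IsLongestPath E t v f) {s : ℕ} (hs : s ∈ keyIdx E t v f (v t))
    (hs1 : s + 1 ∈ keyIdx E t v f (v 0) ∨ s ∈ edgeIdx t f (v 0)) : False := by
  obtain ⟨hst, hsne, e', he', hse'⟩ := mem_keyIdx.1 hs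
  obtain ⟨he'E, he'off, hte'⟩ := mem_outEdges.1 he'
  have hst' : s < t := lt_of_le_of_ne hst fun h => hsne (h ▸ rfl)
  obtain ⟨g, hgE, hgoff, h0g, hvg⟩ : ∃ g ∈ E, (g = f s ∨ ∀ i < t, f i ≠ g) ∧ v 0 ∈ g ∧
      v (s + 1) ∈ g ∧ g ≠ e' := by
    rcases hs1 with hs1 | hs1
    · obtain ⟨-, -, g, hg, hg1⟩ := mem_keyIdx.1 hs1
      obtain ⟨hgE, hgoff, h0g⟩ := mem_outEdges.1 hg
      rcases eq_or_ne g e' with rfl | hge'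
      · exact (hP.no_closing_edge hconn hcard hgE hgoff h0g hte').elim
      · exact ⟨g, hgE, Or.inr hgoff, h0g, hg1, hge'⟩
    · exact ⟨f s, hP.1.edge_mem s hst', Or.inl rfl, (mem_edgeIdx.1 hs1).2,
        hP.1.mem_right s hst', fun h => he'off s hst' h⟩
  have hQ := hP.rotate (j := s + 1) (by omega) (by omega) hgE h0g hvg.1 (by simpa using hgoff)
  refine hQ.no_closing_edge hconn hcard he'E ((forall_rotEdges_ne_iff (by omega) (by omega)).2
    ⟨hvg.2, fun i hi _ => he'off i hi⟩) ?_ ?_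
  · simpa [rotIdx_of_lt (Nat.succ_pos s)] using hse'
  · simpa [rotIdx_of_le hst'] using hte'

lemma IsLongestPath.card_union_add_card_keyIdx_le (hconn : Connected E)
    (hcard : t + 2 ≤ Fintype.card V) (hP : IsLongestPath E t v f) :
    (keyIdx E t v f (v 0) ∪ (edgeIdx t f (v 0)).image (· + 1)).card
      + (keyIdx E t v f (v t)).card ≤ t := by
  set U := keyIdx E t v f (v 0) ∪ (edgeIdx t f (v 0)).image (· + 1)
  have hU : ∀ u ∈ U, 1 ≤ u ∧ u ≤ t := fun u hu => by
    rcases Finset.mem_union.1 hu with hu | hu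
    · obtain ⟨hut, hu0, -⟩ := mem_keyIdx.1 hu
      exact ⟨Nat.one_le_iff_ne_zero.2 fun h => hu0 (h ▸ rfl), hut⟩
    · obtain ⟨i, hi, rfl⟩ := Finset.mem_image.1 hu
      have := (mem_edgeIdx.1 hi).1; omega
  have hdisj : Disjoint (U.image (· - 1)) (keyIdx E t v f (v t)) := by
    refine Finset.disjoint_left.2 fun s hs hsB => ?_
    obtain ⟨u, hu, rfl⟩ := Finset.mem_image.1 hs
    obtain ⟨hu1, -⟩ := hU u hu
    refine hP.not_cross hconn hcard hsB ?_
    rw [Nat.sub_add_cancel hu1]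
    rcases Finset.mem_union.1 hu with hu | hu
    · exact Or.inl hu
    · obtain ⟨i, hi, rfl⟩ := Finset.mem_image.1 hu
      exact Or.inr (by simpa using hi)
  have hsub : U.image (· - 1) ∪ keyIdx E t v f (v t) ⊆ Finset.range t := fun s hs => by
    rw [Finset.mem_range]
    rcases Finset.mem_union.1 hs with hs | hs
    · obtain ⟨u, hu, rfl⟩ := Finset.mem_image.1 hs
      have := hU u hu; omega
    · obtain ⟨hst, hsne, -⟩ := mem_keyIdx.1 hs
      exact lt_of_le_of_ne hst fun h => hsne (h ▸ rfl)
  have hinj : (U.image (· - 1)).card = U.card :=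
    Finset.card_image_of_injOn fun a ha b hb hab => by
      have := hU a ha; have := hU b hb; omega
  have := Finset.card_le_card hsub
  rw [Finset.card_union_of_disjoint hdisj, Finset.card_range, hinj] at this
  exact this

end Counting

section Profile

variable {t : ℕ} {v : ℕ → V} {f : ℕ → Finset V}

lemma outEdges_rev (w : V) : outEdges E t (fun i => f (t - 1 - i)) w = outEdges E t f w := by
  ext e
  simp only [mem_outEdges]
  refine and_congr_right fun _ => and_congr_left fun _ =>
    ⟨fun h i hi => ?_, fun h i hi => h _ (by omega)⟩
  convert h (t - 1 - i) (by omega) using 2; omega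

lemma keyIdx_comp {f' : ℕ → Finset V} {w : V} {σ : ℕ → ℕ} (hσ : ∀ i ≤ t, σ i ≤ t)
    (hσσ : ∀ i ≤ t, σ (σ i) = i) (hout : outEdges E t f' w = outEdges E t f w) :
    keyIdx E t (v ∘ σ) f' w = (keyIdx E t v f w).image σ := by
  ext i
  simp only [Finset.mem_image, mem_keyIdx, hout, Function.comp_apply]
  constructor
  · rintro ⟨hi, h⟩
    exact ⟨σ i, ⟨hσ i hi, h⟩, hσσ i hi⟩
  · rintro ⟨j, ⟨hj, h⟩, rfl⟩
    exact ⟨hσ j hj, by rwa [hσσ j hj]⟩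

lemma card_keyIdx_comp {f' : ℕ → Finset V} {w : V} {σ : ℕ → ℕ} (hσ : ∀ i ≤ t, σ i ≤ t)
    (hσσ : ∀ i ≤ t, σ (σ i) = i) (hout : outEdges E t f' w = outEdges E t f w) :
    (keyIdx E t (v ∘ σ) f' w).card = (keyIdx E t v f w).card := by
  rw [keyIdx_comp hσ hσσ hout]
  refine Finset.card_image_of_injOn fun i hi j hj hij => ?_
  rw [← hσσ i (mem_keyIdx.1 hi).1, ← hσσ j (mem_keyIdx.1 hj).1]
  exact congrArg σ hij

lemma keyIdx_rev (w : V) :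
    keyIdx E t (fun i => v (t - i)) (fun i => f (t - 1 - i)) w
      = (keyIdx E t v f w).image (t - ·) :=
  keyIdx_comp (σ := (t - ·)) (fun _ _ => by omega) (fun _ _ => by omega) (outEdges_rev w)

lemma card_keyIdx_rev (w : V) :
    (keyIdx E t (fun i => v (t - i)) (fun i => f (t - 1 - i)) w).card
      = (keyIdx E t v f w).card :=
  card_keyIdx_comp (σ := (t - ·)) (fun _ _ => by omega) (fun _ _ => by omega) (outEdges_rev w)

lemma card_edgeIdx_rev (w : V) :
    (edgeIdx t (fun i => f (t - 1 - i)) w).card = (edgeIdx t f w).card := by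
  refine Finset.card_bij (fun i _ => t - 1 - i) (fun i hi => ?_) (fun i hi j hj hij => ?_)
    (fun i hi => ⟨t - 1 - i, ?_, ?_⟩)
  · simp only [mem_edgeIdx] at hi ⊢; exact ⟨by omega, hi.2⟩
  · simp only [mem_edgeIdx] at hi hj; omega
  · simp only [mem_edgeIdx] at hi ⊢
    exact ⟨by omega, by rw [show t - 1 - (t - 1 - i) = i by omega]; exact hi.2⟩
  · simp only [mem_edgeIdx] at hi; omega

lemma IsLongestPath.le_card_edgeIdx_add_choose {m r : ℕ} (hP : IsLongestPath E t v f)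
    (hE : IsRGraph r E) (hdeg : m ≤ minDeg E) :
    m ≤ (edgeIdx t f (v 0)).card + (keyIdx E t v f (v 0)).card.choose (r - 1) :=
  calc m ≤ deg E (v 0) := hdeg.trans (Nat.sInf_le ⟨_, rfl⟩)
    _ ≤ _ := deg_le_card_edgeIdx_add_card_outEdges t f (v 0)
    _ ≤ _ := Nat.add_le_add_left (hP.card_outEdges_le hE) _

lemma IsLongestPath.card_keyIdx_add_le (hconn : Connected E) (hcard : t + 2 ≤ Fintype.card V)
    (hP : IsLongestPath E t v f) :
    (keyIdx E t v f (v 0)).card + (keyIdx E t v f (v t)).card ≤ t ∧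
    (edgeIdx t f (v 0)).card + (keyIdx E t v f (v t)).card ≤ t := by
  have h := hP.card_union_add_card_keyIdx_le hconn hcard
  have hD : ((edgeIdx t f (v 0)).image (· + 1)).card = (edgeIdx t f (v 0)).card :=
    Finset.card_image_of_injective _ (add_left_injective 1)
  have h1 := Finset.card_le_card (Finset.subset_union_left (s₁ := keyIdx E t v f (v 0))
    (s₂ := (edgeIdx t f (v 0)).image (· + 1)))
  have h2 := Finset.card_le_card (Finset.subset_union_right (s₁ := keyIdx E t v f (v 0))
    (s₂ := (edgeIdx t f (v 0)).image (· + 1)))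
  omega

lemma IsLongestPath.profile {m r : ℕ} (hconn : Connected E) (hcard : t + 2 ≤ Fintype.card V)
    (hP : IsLongestPath E t v f) (hE : IsRGraph r E) (hdeg : m ≤ minDeg E) :
    m ≤ (edgeIdx t f (v 0)).card + (keyIdx E t v f (v 0)).card.choose (r - 1) ∧
    m ≤ (edgeIdx t f (v t)).card + (keyIdx E t v f (v t)).card.choose (r - 1) ∧
    (keyIdx E t v f (v 0)).card + (keyIdx E t v f (v t)).card ≤ t ∧
    (edgeIdx t f (v 0)).card + (keyIdx E t v f (v t)).card ≤ t ∧
    (edgeIdx t f (v t)).card + (keyIdx E t v f (v 0)).card ≤ t := by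
  have hR := hP.rev.card_keyIdx_add_le hconn hcard
  have hR' := hP.rev.le_card_edgeIdx_add_choose hE hdeg
  simp only [Nat.sub_zero, Nat.sub_self, card_keyIdx_rev, card_edgeIdx_rev] at hR hR'
  obtain ⟨h3, h4⟩ := hP.card_keyIdx_add_le hconn hcard
  exact ⟨hP.le_card_edgeIdx_add_choose hE hdeg, hR', h3, h4, hR.2⟩

end Profile

section Arithmetic

lemma choose_two_le_choose {n j : ℕ} (hj : 2 ≤ j) (hjn : j + 2 ≤ n) :
    n.choose 2 ≤ n.choose j := by
  have hhalf : ∀ i, 2 ≤ i → i ≤ n / 2 → n.choose 2 ≤ n.choose i := by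
    intro i
    induction i with
    | zero => omega
    | succ m ih =>
      intro h2 hm
      rcases (show m = 1 ∨ 2 ≤ m by omega) with rfl | hm2
      · rfl
      · exact (ih hm2 (by omega)).trans (Nat.choose_le_succ_of_lt_half_left (by omega))
  rcases le_or_gt j (n / 2) with hle | hgt
  · exact hhalf j hj hle
  · rw [← Nat.choose_symm (by omega : j ≤ n)]
    exact hhalf _ (by omega) (by omega)

lemma two_mul_le_choose_two {n : ℕ} (hn : 5 ≤ n) : 2 * n ≤ n.choose 2 := by
  rw [Nat.choose_two_right, Nat.le_div_iff_mul_le two_pos]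
  obtain ⟨m, rfl⟩ : ∃ m, n = m + 5 := ⟨n - 5, by omega⟩
  rw [show m + 5 - 1 = m + 4 by omega]
  nlinarith

/-- For `k ≥ 6`, an endpoint of a path of length at most `2k` with fewer than `k` key neighbours
lies on so many path edges that the other endpoint cannot reach the degree bound. -/
lemma le_of_profile {k r t a b d d' : ℕ} (hr : 4 ≤ r) (hkr : r < k) (hk : 6 ≤ k)
    (ht : t ≤ 2 * k) (h1 : k.choose (r - 1) ≤ d + a.choose (r - 1))
    (h2 : k.choose (r - 1) ≤ d' + b.choose (r - 1)) (h4 : d + b ≤ t) (h5 : d' + a ≤ t) :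
    k ≤ a := by
  by_contra! ha
  have hpascal : k.choose (r - 1) = (k - 1).choose (r - 2) + (k - 1).choose (r - 1) := by
    rw [show k = k - 1 + 1 by omega, show r - 1 = r - 2 + 1 by omega, Nat.choose_succ_succ]
    simp only [Nat.add_sub_cancel]
  have hd : (k - 1).choose 2 ≤ d :=
    calc (k - 1).choose 2 ≤ (k - 1).choose (r - 2) := choose_two_le_choose (by omega) (by omega)
      _ ≤ d := by
        have := Nat.choose_le_choose (r - 1) (show a ≤ k - 1 by omega)
        omega
  have hk1 := two_mul_le_choose_two (show 5 ≤ k - 1 by omega)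
  have hb : b.choose (r - 1) = 0 := Nat.choose_eq_zero_of_lt (by omega)
  have hk2 : k.choose 2 ≤ k.choose (r - 1) := choose_two_le_choose (by omega) (by omega)
  have hk3 : k.choose 2 = (k - 1) + (k - 1).choose 2 := by
    rw [show k = k - 1 + 1 by omega, Nat.choose_succ_succ, Nat.choose_one_right]
    simp only [Nat.add_sub_cancel]
  omega

lemma profile_five {t a b d d' : ℕ} (ht : t ≤ 10) (h1 : 10 ≤ d + a.choose 3)
    (h2 : 10 ≤ d' + b.choose 3) (h3 : a + b ≤ t) (h4 : d + b ≤ t) (h5 : d' + a ≤ t) :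
    t = 10 ∧ (a = 0 ∧ b = 0 ∧ d = 10 ∧ d' = 10 ∨ a = 4 ∧ b = 4 ∧ d = 6 ∧ d' = 6 ∨
      a = 5 ∧ b = 5) := by
  have ha : a ≤ 10 := by omega
  have hb : b ≤ 10 := by omega
  interval_cases a <;> interval_cases b <;> simp [Nat.choose] at h1 h2 ⊢ <;> omega

lemma profile_arith {k r t a b d d' : ℕ} (hr : 4 ≤ r) (hkr : r < k) (ht : t ≤ 2 * k)
    (h1 : k.choose (r - 1) ≤ d + a.choose (r - 1))
    (h2 : k.choose (r - 1) ≤ d' + b.choose (r - 1)) (h3 : a + b ≤ t) (h4 : d + b ≤ t)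
    (h5 : d' + a ≤ t) :
    t = 2 * k ∧ (a = k ∧ b = k ∨ k = 5 ∧ (a = 0 ∧ b = 0 ∧ d = 10 ∧ d' = 10 ∨
      a = 4 ∧ b = 4 ∧ d = 6 ∧ d' = 6)) := by
  rcases (show k = 5 ∨ 6 ≤ k by omega) with rfl | hk
  · obtain rfl : r = 4 := by omega
    obtain ⟨ht, hc | hc | hc⟩ := profile_five (by omega) h1 h2 h3 h4 h5 <;> omega
  · have := le_of_profile hr hkr hk ht h1 h2 h4 h5
    have := le_of_profile hr hkr hk ht h2 h1 (by omega) (by omega)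
    omega

end Arithmetic

section Surgery

variable {t : ℕ} {v : ℕ → V} {f : ℕ → Finset V}

lemma outEdges_rotEdges_self {j : ℕ} (hj1 : 1 ≤ j) (hjt : j ≤ t) (w : V) :
    outEdges E t (rotEdges f (f (j - 1)) j) w = outEdges E t f w := by
  ext e
  simp only [mem_outEdges, forall_rotEdges_ne_iff hj1 hjt]
  refine and_congr_right fun _ => and_congr_left fun _ => ⟨fun ⟨hg, h⟩ i hi => ?_,
    fun h => ⟨h _ (by omega), fun i hi _ => h i hi⟩⟩
  rcases eq_or_ne i (j - 1) with rfl | hij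
  exacts [hg, h i hi hij]

lemma outEdges_rotEdges_of_notMem {g : Finset V} {j : ℕ} (hj1 : 1 ≤ j) (hjt : j ≤ t) {w : V}
    (hwg : w ∉ g) (hwf : w ∉ f (j - 1)) :
    outEdges E t (rotEdges f g j) w = outEdges E t f w := by
  ext e
  simp only [mem_outEdges, forall_rotEdges_ne_iff hj1 hjt]
  refine and_congr_right fun _ => and_congr_left fun hwe => ⟨fun ⟨_, h⟩ i hi => ?_,
    fun h => ⟨fun hg => hwg (hg ▸ hwe), fun i hi _ => h i hi⟩⟩
  rcases eq_or_ne i (j - 1) with rfl | hij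
  exacts [fun hf => hwf (hf ▸ hwe), h i hi hij]

lemma IsLongestPath.card_outEdges_last_le {r : ℕ} (hP : IsLongestPath E t v f)
    (hE : IsRGraph r E) :
    (outEdges E t f (v t)).card ≤ (keyIdx E t v f (v t)).card.choose (r - 1) := by
  simpa [outEdges_rev, card_keyIdx_rev] using hP.rev.card_outEdges_le hE

lemma mem_of_card_edgeIdx_eq {w : V} (h : (edgeIdx t f w).card = t) {i : ℕ} (hi : i < t) :
    w ∈ f i := by
  have := Finset.eq_of_subset_of_card_le (Finset.filter_subset _ (Finset.range t))
    (by rw [Finset.card_range]; exact h.ge)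
  have hi' : i ∈ edgeIdx t f w := by rw [edgeIdx, this]; exact Finset.mem_range.2 hi
  exact (mem_edgeIdx.1 hi').2

lemma IsPath.eq_image_of_forall_mem {r : ℕ} (h : IsPath E t v f) (hE : IsRGraph r E)
    {e : Finset V} (he : e ∈ E) {I : Finset ℕ} (hIt : ∀ i ∈ I, i ≤ t) (hIr : r ≤ I.card)
    (hIe : ∀ i ∈ I, v i ∈ e) : e = I.image v := by
  refine (Finset.eq_of_subset_of_card_le (Finset.image_subset_iff.2 hIe) ?_).symm
  rw [hE e he, Finset.card_image_of_injOn fun i hi j hj hij => h.inj_vert i (hIt i hi) j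
    (hIt j hj) hij]
  exact hIr

lemma IsLongestPath.last_notMem_edge (hconn : Connected E) (hcard : t + 2 ≤ Fintype.card V)
    (hP : IsLongestPath E t v f) {i : ℕ} (hi : i ∈ keyIdx E t v f (v 0)) : v t ∉ f (i - 1) := by
  intro h
  obtain ⟨hit, hine, e, he, hie⟩ := mem_keyIdx.1 hi
  have hi0 : i ≠ 0 := fun h0 => hine (h0 ▸ rfl)
  refine hP.rev.not_cross hconn hcard (s := t - i) (mem_keyIdx.2 ⟨by omega, ?_, e, ?_, ?_⟩)
    (Or.inr (mem_edgeIdx.2 ⟨by omega, ?_⟩))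
  · simpa [show t - (t - i) = i by omega] using hine
  · simpa [outEdges_rev] using he
  · simpa [show t - (t - i) = i by omega] using hie
  · simpa [show t - 1 - (t - i) = i - 1 by omega] using h

lemma IsPath.edge_eq_image (h : IsPath E t v f) (hE : IsRGraph 4 E) {i : ℕ} (hi0 : 0 < i)
    (hit : i + 1 < t) (h0 : v 0 ∈ f i) (ht : v t ∈ f i) :
    f i = ({0, i, i + 1, t} : Finset ℕ).image v := by
  refine h.eq_image_of_forall_mem hE (h.edge_mem i (by omega)) (by simp; omega) ?_ (by
    simpa using ⟨h0, h.mem_left i (by omega), h.mem_right i (by omega), ht⟩)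
  rw [Finset.card_insert_of_notMem (by simp; omega), Finset.card_insert_of_notMem (by simp; omega),
    Finset.card_pair (by omega)]

/-- Rotating along the outside edge through `v 0` and `v (i+1)` turns `f i` into an outside edge at
the new first vertex `v i`. -/
lemma IsLongestPath.exists_eq_of_mem_edge (hP : IsLongestPath E t v f) {i : ℕ} (hi : i < t)
    (hiA : i + 1 ∈ keyIdx E t v f (v 0)) {x : V} (hx : x ∈ f i) : ∃ m ≤ t, v m = x := by
  obtain ⟨-, -, e, he, hie⟩ := mem_keyIdx.1 hiA
  obtain ⟨heE, heoff, h0e⟩ := mem_outEdges.1 he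
  have hQ := hP.rotate (j := i + 1) (by omega) (by omega) heE h0e hie (Or.inr heoff)
  have hoff : ∀ m < t, rotEdges f e (i + 1) m ≠ f i := fun m hm h => by
    obtain h' | ⟨m', hm', hm'i, h'⟩ := (exists_rotEdges_eq_iff (by omega) (by omega)).1 ⟨m, hm, h⟩
    · exact heoff i hi h'.symm
    · exact hm'i (hP.1.inj_edge _ hm' _ hi h')
  obtain ⟨m, hm, hmx⟩ := hQ.exists_eq_of_mem (hP.1.edge_mem i hi) hoff
    (by simpa [rotIdx_of_lt (Nat.succ_pos i)] using hP.1.mem_left i hi) hx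
  exact ⟨_, rotIdx_le (by omega) hm, hmx⟩

lemma IsLongestPath.exists_restart (hP : IsLongestPath E t v f) {p : ℕ} (hp : p < t)
    (h0 : v 0 ∈ f p) : ∃ w g, IsLongestPath E t w g ∧ w 0 = v p ∧
      (∀ i ≤ t, ∃ m ≤ t, w i = v m) ∧ ∀ i < t, ∃ m < t, g i = f m := by
  refine ⟨_, _, hP.rotate (j := p + 1) (by omega) (by omega) (hP.1.edge_mem p hp) h0
    (hP.1.mem_right p hp) (Or.inl rfl), by simp [rotIdx_of_lt (Nat.succ_pos p)],
    fun i hi => ⟨_, rotIdx_le (by omega) hi, rfl⟩, fun i hi => ?_⟩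
  obtain h | ⟨m, hm, -, h⟩ :=
    (exists_rotEdges_eq_iff (f := f) (j := p + 1) (by omega) (by omega)).1 ⟨i, hi, rfl⟩
  exacts [⟨p, hp, h.symm⟩, ⟨m, hm, h.symm⟩]

end Surgery

lemma eq_Icc_one_card_of_pred_mem {S : Finset ℕ} (h1 : ∀ i ∈ S, 1 ≤ i)
    (hpred : ∀ i ∈ S, 2 ≤ i → i - 1 ∈ S) : S = Finset.Icc 1 S.card := by
  have hdown : ∀ d, ∀ i ∈ S, d < i → i - d ∈ S := by
    intro d
    induction d with
    | zero => exact fun i hi _ => hi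
    | succ d ih =>
      intro i hi hdi
      simpa [Nat.sub_sub] using hpred _ (ih i hi (by omega)) (by omega)
  have hle : ∀ i ∈ S, i ≤ S.card := fun i hi => by
    have hsub : Finset.Icc 1 i ⊆ S := fun j hj => by
      rw [Finset.mem_Icc] at hj
      simpa [show i - (i - j) = j by omega] using hdown (i - j) i hi (by omega)
    simpa using Finset.card_le_card hsub
  refine Finset.eq_of_subset_of_card_le (fun i hi => Finset.mem_Icc.2 ⟨h1 i hi, hle i hi⟩) ?_
  simp

section ExceptionalCase

variable {v : ℕ → V} {f : ℕ → Finset V}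

lemma IsLongestPath.cases_five (hconn : Connected E) (hcard : 12 ≤ Fintype.card V)
    (hE : IsRGraph 4 E) (hdeg : 10 ≤ minDeg E) (hP : IsLongestPath E 10 v f) :
    (keyIdx E 10 v f (v 0)).card = 0 ∧ (keyIdx E 10 v f (v 10)).card = 0 ∧
      (edgeIdx 10 f (v 0)).card = 10 ∧ (edgeIdx 10 f (v 10)).card = 10 ∨
    (keyIdx E 10 v f (v 0)).card = 4 ∧ (keyIdx E 10 v f (v 10)).card = 4 ∧
      (edgeIdx 10 f (v 0)).card = 6 ∧ (edgeIdx 10 f (v 10)).card = 6 ∨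
    (keyIdx E 10 v f (v 0)).card = 5 ∧ (keyIdx E 10 v f (v 10)).card = 5 := by
  obtain ⟨h1, h2, h3, h4, h5⟩ := hP.profile (r := 4) hconn hcard hE hdeg
  exact (profile_five le_rfl h1 h2 h3 h4 h5).2

lemma IsLongestPath.false_of_cases_zero (hconn : Connected E) (hcard : 12 ≤ Fintype.card V)
    (hE : IsRGraph 4 E) (hdeg : 10 ≤ minDeg E) (hP : IsLongestPath E 10 v f)
    (hb : (keyIdx E 10 v f (v 10)).card = 0) (hd : (edgeIdx 10 f (v 0)).card = 10)
    (hd' : (edgeIdx 10 f (v 10)).card = 10) : False := by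
  have hout : outEdges E 10 f (v 10) = ∅ :=
    Finset.card_eq_zero.1 (by simpa [hb] using hP.card_outEdges_last_le hE)
  -- for `2 ≤ i ≤ 8` the edge `f i` is `{v 0, v i, v (i+1), v 10}`
  have hv1 : edgeIdx 10 f (v 1) ⊆ {0, 1, 9} := fun i hi => by
    obtain ⟨hi10, hv1i⟩ := mem_edgeIdx.1 hi
    by_contra hi'
    simp only [Finset.mem_insert, Finset.mem_singleton] at hi'
    rw [hP.1.edge_eq_image hE (by omega) (by omega) (mem_of_card_edgeIdx_eq hd hi10)
      (mem_of_card_edgeIdx_eq hd' hi10)] at hv1i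
    obtain ⟨m, hm, hm1⟩ := Finset.mem_image.1 hv1i
    simp only [Finset.mem_insert, Finset.mem_singleton] at hm
    have := hP.1.inj_vert m (by omega) 1 (by omega) hm1
    omega
  have hout1 : 0 < (outEdges E 10 f (v 1)).card := by
    have := deg_le_card_edgeIdx_add_card_outEdges (E := E) 10 f (v 1)
    have := hdeg.trans (Nat.sInf_le ⟨v 1, rfl⟩)
    have := (Finset.card_le_card hv1).trans Finset.card_le_three
    omega
  -- rotating along `f 1 ∋ v 0, v 2` gives a longest path from `v 1` to `v 10` with the same edges
  have hQ := hP.rotate (j := 2) (g := f (2 - 1)) (by omega) (by omega)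
    (hP.1.edge_mem (2 - 1) (by omega))
    (mem_of_card_edgeIdx_eq hd (by omega)) (hP.1.mem_right (2 - 1) (by omega)) (Or.inl rfl)
  have hQ0 : (v ∘ rotIdx 2) 0 = v 1 := by simp [rotIdx]
  have hQ10 : (v ∘ rotIdx 2) 10 = v 10 := by simp [rotIdx]
  have haQ : 3 ≤ (keyIdx E 10 (v ∘ rotIdx 2) (rotEdges f (f (2 - 1)) 2) (v 1)).card := by
    have := hQ.card_outEdges_le hE
    rw [hQ0, outEdges_rotEdges_self (by omega) (by omega)] at this
    by_contra! h
    rw [Nat.choose_eq_zero_of_lt h] at this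
    omega
  have hbQ : (keyIdx E 10 (v ∘ rotIdx 2) (rotEdges f (f (2 - 1)) 2) (v 10)).card = 0 := by
    refine Finset.card_eq_zero.2 (Finset.eq_empty_of_forall_notMem fun i hi => ?_)
    obtain ⟨-, -, e, he, -⟩ := mem_keyIdx.1 hi
    rw [outEdges_rotEdges_self (by omega) (by omega), hout] at he
    exact Finset.notMem_empty e he
  rcases hQ.cases_five hconn hcard hE hdeg with h | h | h <;> rw [hQ0, hQ10] at h <;> omega

lemma IsLongestPath.keyIdx_subset_of_four (hconn : Connected E) (hcard : 12 ≤ Fintype.card V)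
    (hE : IsRGraph 4 E) (hdeg : 10 ≤ minDeg E) (hP : IsLongestPath E 10 v f)
    (hb : (keyIdx E 10 v f (v 10)).card = 4) :
    (keyIdx E 10 v f (v 0)).card = 4 ∧
      keyIdx E 10 v f (v 0) ⊆ (edgeIdx 10 f (v 0)).image (· + 1) := by
  have hd : (keyIdx E 10 v f (v 0)).card = 4 ∧ (edgeIdx 10 f (v 0)).card = 6 := by
    rcases hP.cases_five hconn hcard hE hdeg with h | h | h <;> omega
  have hD : ((edgeIdx 10 f (v 0)).image (· + 1)).card = 6 := by
    rw [Finset.card_image_of_injective _ (add_left_injective 1)]; exact hd.2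
  have hcross := hP.card_union_add_card_keyIdx_le hconn hcard
  have hU := Finset.eq_of_subset_of_card_le (Finset.subset_union_right
    (s₁ := keyIdx E 10 v f (v 0)) (s₂ := (edgeIdx 10 f (v 0)).image (· + 1))) (by omega)
  exact ⟨hd.1, hU ▸ Finset.subset_union_left⟩

lemma IsLongestPath.pred_mem_keyIdx_of_four (hconn : Connected E)
    (hcard : 12 ≤ Fintype.card V) (hE : IsRGraph 4 E) (hdeg : 10 ≤ minDeg E)
    (hP : IsLongestPath E 10 v f) (hb : (keyIdx E 10 v f (v 10)).card = 4) {i : ℕ}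
    (hi : i ∈ keyIdx E 10 v f (v 0)) (hi2 : 2 ≤ i) : i - 1 ∈ keyIdx E 10 v f (v 0) := by
  obtain ⟨hi10, hine, e, he, hie⟩ := mem_keyIdx.1 hi
  obtain ⟨heE, heoff, h0e⟩ := mem_outEdges.1 he
  have h10e : v 10 ∉ e := hP.no_closing_edge hconn hcard heE heoff h0e
  have hi9 : i ≤ 9 := by
    by_contra
    exact h10e (show i = 10 by omega ▸ hie)
  have h10f : v 10 ∉ f (i - 1) := hP.last_notMem_edge hconn hcard hi
  have hQ := hP.rotate (j := i) (by omega) (by omega) heE h0e hie (Or.inr heoff)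
  have hbQ : (keyIdx E 10 (v ∘ rotIdx i) (rotEdges f e i) ((v ∘ rotIdx i) 10)).card = 4 := by
    rw [Function.comp_apply, rotIdx_of_le (by omega), card_keyIdx_comp
      (fun _ => rotIdx_le hi10) (fun j _ => rotIdx_involutive i j)
      (outEdges_rotEdges_of_notMem (by omega) (by omega) h10e h10f), hb]
  have hQ0 : (v ∘ rotIdx i) 0 = v (i - 1) := by simp [rotIdx_of_lt (show 0 < i by omega)]
  -- `f (i - 1)` now lies off the path and joins its ends `v (i-1)` and `v i`
  have hiQ : i ∈ keyIdx E 10 (v ∘ rotIdx i) (rotEdges f e i) ((v ∘ rotIdx i) 0) := by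
    have hoff : ∀ m < 10, rotEdges f e i m ≠ f (i - 1) := fun m hm h => by
      obtain h' | ⟨m', hm', hm'i, h'⟩ :=
        (exists_rotEdges_eq_iff (f := f) (j := i) (by omega) (by omega)).1 ⟨m, hm, h⟩
      · exact heoff _ (by omega) h'.symm
      · exact hm'i (hP.1.inj_edge _ hm' _ (by omega) h')
    have hQi : (v ∘ rotIdx i) i = v i := by simp [rotIdx_of_le (le_refl i)]
    rw [hQ0, mem_keyIdx, hQi]
    refine ⟨hi10, fun h => ?_, f (i - 1), mem_outEdges.2 ⟨hP.1.edge_mem _ (by omega),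
      hoff, hP.1.mem_left _ (by omega)⟩, ?_⟩
    · have := hP.1.inj_vert _ hi10 _ (by omega) h; omega
    · simpa [Nat.sub_add_cancel (show 1 ≤ i by omega)] using hP.1.mem_right (i - 1) (by omega)
  obtain ⟨m, hm, hmi⟩ := Finset.mem_image.1
    ((hQ.keyIdx_subset_of_four hconn hcard hE hdeg hbQ).2 hiQ)
  obtain ⟨-, hQm⟩ := mem_edgeIdx.1 hm
  rw [hQ0, show m = i - 1 by omega, rotEdges_self] at hQm
  refine mem_keyIdx.2 ⟨by omega, fun h => ?_, e, he, hQm⟩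
  have := hP.1.inj_vert _ (by omega) _ (by omega) h; omega

lemma IsLongestPath.keyIdx_eq_Icc_of_four (hconn : Connected E)
    (hcard : 12 ≤ Fintype.card V) (hE : IsRGraph 4 E) (hdeg : 10 ≤ minDeg E)
    (hP : IsLongestPath E 10 v f) (hb : (keyIdx E 10 v f (v 10)).card = 4) :
    keyIdx E 10 v f (v 0) = Finset.Icc 1 4 := by
  have h := eq_Icc_one_card_of_pred_mem (S := keyIdx E 10 v f (v 0))
    (fun i hi => Nat.one_le_iff_ne_zero.2 fun h0 => (mem_keyIdx.1 hi).2.1 (h0 ▸ rfl))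
    (fun i hi h2 => hP.pred_mem_keyIdx_of_four hconn hcard hE hdeg hb hi h2)
  rwa [(hP.keyIdx_subset_of_four hconn hcard hE hdeg hb).1] at h

lemma IsLongestPath.mem_edge_of_four (hconn : Connected E) (hcard : 12 ≤ Fintype.card V)
    (hE : IsRGraph 4 E) (hdeg : 10 ≤ minDeg E) (hP : IsLongestPath E 10 v f)
    (ha : (keyIdx E 10 v f (v 0)).card = 4) {i : ℕ} (hi : i < 6) : v 0 ∈ f i := by
  have hrev := hP.rev.keyIdx_eq_Icc_of_four hconn hcard hE hdeg
    (by simpa [card_keyIdx_rev] using ha)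
  rw [keyIdx_rev, Nat.sub_zero] at hrev
  have hB : ∀ s, 6 ≤ s → s ≤ 9 → s ∈ keyIdx E 10 v f (v 10) := fun s h6 h9 => by
    have hs : 10 - s ∈ (keyIdx E 10 v f (v 10)).image (10 - ·) := by
      rw [hrev, Finset.mem_Icc]; omega
    obtain ⟨s', hs', hss'⟩ := Finset.mem_image.1 hs
    have := (mem_keyIdx.1 hs').1
    rwa [show s = s' by omega]
  have hD : edgeIdx 10 f (v 0) ⊆ Finset.range 6 := fun s hs => by
    have := (mem_edgeIdx.1 hs).1
    by_contra hs6
    exact hP.not_cross hconn hcard (hB s (by simpa using hs6) (by omega)) (Or.inr hs)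
  have hd : (edgeIdx 10 f (v 0)).card = 6 := by
    rcases hP.cases_five hconn hcard hE hdeg with h | h | h <;> omega
  have := Finset.eq_of_subset_of_card_le hD (by simp [hd])
  exact (mem_edgeIdx.1 (this ▸ Finset.mem_range.2 hi)).2

lemma IsLongestPath.exists_eq_of_mem_of_four (hconn : Connected E)
    (hcard : 12 ≤ Fintype.card V) (hE : IsRGraph 4 E) (hdeg : 10 ≤ minDeg E)
    (hP : IsLongestPath E 10 v f) (ha : (keyIdx E 10 v f (v 0)).card = 4)
    (hb : (keyIdx E 10 v f (v 10)).card = 4) {i : ℕ} (hi : i < 10) {x : V} (hx : x ∈ f i) :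
    ∃ m ≤ 10, v m = x := by
  have ha' : (keyIdx E 10 (fun i => v (10 - i)) (fun i => f (10 - 1 - i)) (v (10 - 10))).card
      = 4 := by
    simpa [card_keyIdx_rev] using ha
  have hb' : (keyIdx E 10 (fun i => v (10 - i)) (fun i => f (10 - 1 - i)) (v (10 - 0))).card
      = 4 := by
    simpa [card_keyIdx_rev] using hb
  rcases (show i < 4 ∨ 4 ≤ i ∧ i ≤ 5 ∨ 6 ≤ i by omega) with hi4 | hi5 | hi6
  · exact hP.exists_eq_of_mem_edge hi
      (by rw [hP.keyIdx_eq_Icc_of_four hconn hcard hE hdeg hb]; simp; omega) hx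
  · rw [hP.1.edge_eq_image hE (by omega) (by omega)
      (hP.mem_edge_of_four hconn hcard hE hdeg ha (by omega))
      (by simpa [show 10 - 1 - (9 - i) = i by omega] using
        hP.rev.mem_edge_of_four hconn hcard hE hdeg hb' (i := 9 - i) (by omega))] at hx
    obtain ⟨m, hm, hmx⟩ := Finset.mem_image.1 hx
    exact ⟨m, by simp at hm; omega, hmx⟩
  · obtain ⟨m, hm, hmx⟩ := hP.rev.exists_eq_of_mem_edge (i := 9 - i) (by omega)
      (by rw [hP.rev.keyIdx_eq_Icc_of_four hconn hcard hE hdeg ha']; simp; omega)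
      (by simpa [show 10 - 1 - (9 - i) = i by omega] using hx)
    exact ⟨10 - m, by omega, hmx⟩

/-- In the `(4, 4)` case the vertices of `P` span a component: every vertex starts a longest path
on the same edges (rotating along a path edge through `v 0` or `v 10`), and no edge leaves. -/
lemma IsLongestPath.false_of_cases_four (hconn : Connected E) (hcard : 12 ≤ Fintype.card V)
    (hE : IsRGraph 4 E) (hdeg : 10 ≤ minDeg E) (hP : IsLongestPath E 10 v f)
    (ha : (keyIdx E 10 v f (v 0)).card = 4) (hb : (keyIdx E 10 v f (v 10)).card = 4) :
    False := by
  refine hconn.false_of_restart (v := v) hcard fun h hh p hp hph ⟨x, hxh, hx⟩ => ?_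
  have hoff : ∀ i < 10, f i ≠ h := fun i hi hfh => by
    obtain ⟨m, hm, hmx⟩ := hP.exists_eq_of_mem_of_four hconn hcard hE hdeg ha hb hi (hfh ▸ hxh)
    exact hx m hm hmx
  obtain ⟨w, g, hQ, hw0, hwv, hgf⟩ : ∃ w g, IsLongestPath E 10 w g ∧ w 0 = v p ∧
      (∀ i ≤ 10, ∃ m ≤ 10, w i = v m) ∧ ∀ i < 10, ∃ m < 10, g i = f m := by
    rcases Nat.lt_or_ge p 6 with hp6 | hp6
    · exact hP.exists_restart (by omega) (hP.mem_edge_of_four hconn hcard hE hdeg ha hp6)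
    · obtain ⟨w, g, hQ, hw0, hwv, hgf⟩ := hP.rev.exists_restart (p := 10 - p) (by omega)
        (hP.rev.mem_edge_of_four hconn hcard hE hdeg (by simpa [card_keyIdx_rev] using hb)
          (by omega))
      refine ⟨w, g, hQ, by rw [hw0, show 10 - (10 - p) = p by omega], fun i hi => ?_,
        fun i hi => ?_⟩
      · obtain ⟨m, hm, hwm⟩ := hwv i hi
        exact ⟨10 - m, by omega, hwm⟩
      · obtain ⟨m, hm, hgm⟩ := hgf i hi
        exact ⟨10 - 1 - m, by omega, hgm⟩
  refine ⟨w, g, hQ, hw0 ▸ hph, fun i hi hgi => ?_, hwv⟩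
  obtain ⟨m, hm, hgm⟩ := hgf i hi
  exact hoff m hm (hgm ▸ hgi)

end ExceptionalCase

lemma IsLongestPath.card_keyIdx_eq {k r t : ℕ} {v : ℕ → V} {f : ℕ → Finset V} (hr : 4 ≤ r)
    (hkr : r < k) (hcard : 2 * k + 2 ≤ Fintype.card V) (hE : IsRGraph r E) (hconn : Connected E)
    (hdeg : k.choose (r - 1) ≤ minDeg E) (hP : IsLongestPath E t v f) (ht : t ≤ 2 * k) :
    t = 2 * k ∧ (keyIdx E t v f (v 0)).card = k ∧ (keyIdx E t v f (v t)).card = k := by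
  obtain ⟨h1, h2, h3, h4, h5⟩ := hP.profile hconn (by omega) hE hdeg
  obtain ⟨rfl, hab | ⟨rfl, h00 | h44⟩⟩ := profile_arith hr hkr ht h1 h2 h3 h4 h5
  · exact ⟨rfl, hab⟩
  all_goals
    obtain rfl : r = 4 := by omega
    have hdeg : 10 ≤ minDeg E := by simpa [Nat.choose] using hdeg
  · exact (hP.false_of_cases_zero hconn hcard hE hdeg h00.2.1 h00.2.2.1 h00.2.2.2).elim
  · exact (hP.false_of_cases_four hconn hcard hE hdeg h44.1 h44.2.1).elim

/-- **Theorem (Statement 16).** Let `k > r ≥ 4`, `n > 2k+1`, and let `H` be a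
connected `r`-graph on `n` vertices with `δ₁(H) ≥ C(k, r-1)`. Then `ℓ(H) ≥ 2k`;
moreover if `ℓ(H) = 2k` then every longest Berge path `P` (with key vertices
`v 0, ..., v 2k`) satisfies `|K_0(P)| = |K_{2k}(P)| = k`. -/
theorem pathLen_ge_and_Kset_card {V : Type*} [DecidableEq V] [Fintype V]
    (k r n : ℕ) (hr4 : 4 ≤ r) (hkr : k > r)
    (hcard : Fintype.card V = n) (hn : n > 2 * k + 1)
    (E : Finset (Finset V)) (hE : IsRGraph r E) (hconn : Connected E)
    (hdeg : minDeg E ≥ k.choose (r - 1)) :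
    2 * k ≤ pathLen E ∧
      (pathLen E = 2 * k →
        ∀ (v : Fin (2 * k + 1) → V) (f : Fin (2 * k) → Finset V),
          IsBergePath E (2 * k) v f →
            (KsetP E v f (v 0)).ncard = k ∧
            (KsetP E v f (v (Fin.last (2 * k)))).ncard = k) := by
  have hcard' : 2 * k + 2 ≤ Fintype.card V := by omega
  have : Nonempty V := Fintype.card_pos_iff.1 (by omega)
  obtain ⟨v, f, hP⟩ := exists_isLongestPath E
  have hge : 2 * k ≤ pathLen E := by
    by_contra! h
    have := (hP.card_keyIdx_eq hr4 hkr hcard' hE hconn hdeg h.le).1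
    omega
  refine ⟨hge, fun hL v f hvf => ?_⟩
  obtain ⟨-, ha, hb⟩ := (hvf.isLongestPath hL.le).card_keyIdx_eq hr4 hkr hcard' hE hconn hdeg le_rfl
  rw [ncard_KsetP hvf.1, ncard_KsetP hvf.1, ← vertSeq_zero v, ← vertSeq_last v]
  exact ⟨ha, hb⟩

end Berge
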